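/- For the complete graph K_n (n ≥ 3) with all edges bidirected and any vertex u, a random cover tour starting at u is equally likely to end at each of the other n−1 vertices; that is, P(L(u,v)) = 1/(n−1) for every vertex v ≠ u. -/

import Mathlib

open scoped ENNReal BigOperators

/-- A nonempty list of vertices is a walk if consecutive vertices are joined by edges. -/
def IsWalk {V : Type*} (E : V → V → Prop) : List V → Prop
  | [] => False
  | [_] => True
  | a :: b :: t => E a b ∧ IsWalk E (b :: t)

/-- A digraph is connected if there is a directed walk between any two vertices. -/
def Conn {V : Type*} (E : V → V → Prop) : Prop :=
  ∀ a b : V, ∃ l : List V, IsWalk E l ∧ l.head? = some a ∧ l.getLast? = some b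

/-- The out-neighbourhood of a vertex. -/
def outNbrs {V : Type*} [Fintype V] (E : V → V → Prop) [DecidableRel E] (u : V) : Finset V :=
  Finset.univ.filter (fun x => E u x)

/-- The probability that a simple random walk (moving to a uniformly random out-neighbour
at each step) follows a given finite walk. -/
noncomputable def walkWt {V : Type*} [Fintype V] (E : V → V → Prop) [DecidableRel E] :
    List V → ℝ≥0∞
  | [] => 1
  | [_] => 1
  | a :: b :: t => ((outNbrs E a).card : ℝ≥0∞)⁻¹ * walkWt E (b :: t)

/-- `l` is a cover tour from `u` ending at `v`: a walk starting at `u`, visiting every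
vertex, ending at `v`, with `v` first visited at the final step. -/
def IsCoverTour {V : Type*} (E : V → V → Prop) (u v : V) (l : List V) : Prop :=
  IsWalk E l ∧ l.head? = some u ∧ l.getLast? = some v ∧ (∀ x : V, x ∈ l) ∧ v ∉ l.dropLast

/-- `P(L(u,v))`: the probability that a random cover tour from `u` ends at `v`,
i.e. that `v` is the last vertex to be first-visited by the random walk from `u`. -/
noncomputable def coverProb {V : Type*} [Fintype V] (E : V → V → Prop) [DecidableRel E]
    (u v : V) : ℝ≥0∞ :=
  ∑' l : {l : List V // IsCoverTour E u v l}, walkWt E (l : List V)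

/-! Swapping two vertices `v, w ≠ u` is an automorphism of `Kₙ` fixing `u`, so `P(L(u,v))` is the
same for all `v ≠ u`, while `P(L(u,u)) = 0`. It remains to show that the cover tour probabilities
sum to `1`, i.e. that the walk covers `Kₙ` almost surely. Cutting a covering walk of `k` steps at
the moment it first covers the graph writes the probability of covering within `k` steps as the
total weight of the cover tours of at most `k` steps; on the other hand the walk avoids a given
vertex for `k` steps with probability at most `((n - 2) / (n - 1)) ^ k`, so the probability of not
covering within `k` steps tends to `0`. -/

open Finset Filter Topology

section

variable {V : Type*} {E : V → V → Prop}

theorem isWalk_iff_isChain {l : List V} : IsWalk E l ↔ l ≠ [] ∧ l.IsChain E := by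
  induction l with
  | nil => simp [IsWalk]
  | cons a t ih =>
    cases t with
    | nil => simp [IsWalk]
    | cons b t => simp [IsWalk, ih, List.isChain_cons_cons]

theorem IsWalk.map {F : V → V → Prop} (σ : V ≃ V) (hσ : ∀ a b, F (σ a) (σ b) ↔ E a b) :
    ∀ {l : List V}, IsWalk F (l.map σ) ↔ IsWalk E l
  | [] => Iff.rfl
  | [_] => Iff.rfl
  | a :: b :: t => by
    simp only [List.map_cons, IsWalk] at *
    rw [hσ, ← List.map_cons, IsWalk.map σ hσ]

theorem isCoverTour_map (σ : V ≃ V) (hσ : ∀ a b, E (σ a) (σ b) ↔ E a b) {u v : V}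
    {l : List V} : IsCoverTour E (σ u) (σ v) (l.map σ) ↔ IsCoverTour E u v l := by
  have hcover : (∀ x, x ∈ l.map σ) ↔ ∀ x, x ∈ l :=
    ⟨fun h x => by simpa using h (σ x),
      fun h x => by simpa using ⟨σ.symm x, h _, σ.apply_symm_apply x⟩⟩
  simp only [IsCoverTour, IsWalk.map σ hσ, List.head?_map, List.getLast?_map,
    Option.map_eq_some_iff, σ.injective.eq_iff, exists_eq_right, hcover,
    ← List.map_dropLast, List.mem_map_of_injective σ.injective]

def coverTours (E : V → V → Prop) (u : V) : Set (List V) := {l | ∃ v, IsCoverTour E u v l}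

theorem IsCoverTour.eq_of_prefix {u u' v v' : V} {t t' : List V} (ht : IsCoverTour E u v t)
    (ht' : IsCoverTour E u' v' t') (h : t <+: t') : t = t' := by
  have hsplit := List.dropLast_append_getLast? _ ht'.2.2.1
  rw [← hsplit] at h
  rcases List.prefix_concat_iff.mp h with h | h
  · exact h.trans hsplit
  · exact absurd (h.subset (ht.2.2.2.1 v')) ht'.2.2.2.2

theorem exists_coverTours_prefix {u : V} {l : List V} (hl : IsWalk E l) (hu : l.head? = some u)
    (hcov : ∀ x, x ∈ l) : ∃ t ∈ coverTours E u, t <+: l := by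
  induction l using List.reverseRecOn with
  | nil => simp at hu
  | append_singleton l a ih =>
    by_cases hl' : ∀ x, x ∈ l
    · have hne : l ≠ [] := List.ne_nil_of_mem (hl' u)
      obtain ⟨t, ht, htl⟩ := ih
        (isWalk_iff_isChain.mpr ⟨hne, (isWalk_iff_isChain.mp hl).2.left_of_append⟩)
        (by rwa [List.head?_append_of_ne_nil _ hne] at hu) hl'
      exact ⟨t, ht, htl.trans (List.prefix_append _ _)⟩
    · refine ⟨l ++ [a], ⟨a, hl, hu, by simp, hcov, ?_⟩, List.prefix_refl _⟩
      rw [List.dropLast_concat]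
      intro ha
      refine hl' fun x => ?_
      rcases List.mem_append.mp (hcov x) with h | h
      · exact h
      · rwa [List.mem_singleton.mp h]

variable [Fintype V] [DecidableRel E]

theorem walkWt_cons {l : List V} (hl : l ≠ []) (a : V) :
    walkWt E (a :: l) = ((outNbrs E a).card : ℝ≥0∞)⁻¹ * walkWt E l := by
  obtain ⟨b, t, rfl⟩ := List.exists_cons_of_ne_nil hl
  rfl

theorem card_outNbrs_map (σ : V ≃ V) (hσ : ∀ a b, E (σ a) (σ b) ↔ E a b) (a : V) :
    (outNbrs E (σ a)).card = (outNbrs E a).card :=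
  (Finset.card_equiv σ fun x => by simp [outNbrs, hσ]).symm

theorem walkWt_map (σ : V ≃ V) (hσ : ∀ a b, E (σ a) (σ b) ↔ E a b) :
    ∀ l : List V, walkWt E (l.map σ) = walkWt E l
  | [] => rfl
  | [_] => rfl
  | a :: b :: t => by
    simp only [List.map_cons, walkWt] at *
    rw [card_outNbrs_map σ hσ, ← List.map_cons, walkWt_map σ hσ]

theorem coverProb_map (σ : V ≃ V) (hσ : ∀ a b, E (σ a) (σ b) ↔ E a b) (u v : V) :
    coverProb E (σ u) (σ v) = coverProb E u v := by
  let e : {l // IsCoverTour E u v l} ≃ {l // IsCoverTour E (σ u) (σ v) l} :=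
    (Equiv.listEquivOfEquiv σ).subtypeEquiv fun l => (isCoverTour_map σ hσ).symm
  rw [coverProb, coverProb, ← e.tsum_eq]
  exact tsum_congr fun l => walkWt_map σ hσ l

theorem sum_coverProb (u : V) :
    ∑ v, coverProb E u v = ∑' l, (coverTours E u).indicator (walkWt E) l := by
  have hsubtype (v : V) :
      coverProb E u v = ∑' l, {l | IsCoverTour E u v l}.indicator (walkWt E) l :=
    tsum_subtype {l | IsCoverTour E u v l} (walkWt E)
  simp only [hsubtype]
  rw [← Summable.tsum_finsetSum fun _ _ => ENNReal.summable]
  refine tsum_congr fun l => ?_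
  by_cases hl : l ∈ coverTours E u
  · obtain ⟨v, hv⟩ := hl
    have hunique (w : V) (hw : IsCoverTour E u w l) : w = v :=
      Option.some_injective _ (hw.2.2.1.symm.trans hv.2.2.1)
    rw [sum_eq_single v (fun w _ hwv => Set.indicator_of_notMem
      (s := {l | IsCoverTour E u w l}) (fun hw => hwv (hunique w hw)) _) (by simp),
      Set.indicator_of_mem (s := {l | IsCoverTour E u v l}) hv,
      Set.indicator_of_mem (s := coverTours E u) ⟨v, hv⟩]
  · rw [Set.indicator_of_notMem hl]
    exact sum_eq_zero fun v _ => Set.indicator_of_notMem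
      (s := {l | IsCoverTour E u v l}) (fun hv => hl ⟨v, hv⟩) _

theorem coverProb_self [Nontrivial V] (u : V) : coverProb E u u = 0 := by
  have : IsEmpty {l // IsCoverTour E u u l} := by
    refine ⟨fun ⟨l, _, hu, _, hcov, hlast⟩ => ?_⟩
    obtain ⟨t, rfl⟩ := List.head?_eq_some_iff.mp hu
    cases t with
    | nil =>
      obtain ⟨x, hx⟩ := exists_ne u
      exact hx (List.mem_singleton.mp (hcov x))
    | cons b t => exact hlast (by simp)
  exact tsum_empty

variable [DecidableEq V]

def walksFrom (E : V → V → Prop) [DecidableRel E] : ℕ → V → Finset (List V)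
  | 0, u => {[u]}
  | k + 1, u => (outNbrs E u).biUnion fun w => (walksFrom E k w).image (u :: ·)

theorem mem_walksFrom {k : ℕ} {u : V} {l : List V} :
    l ∈ walksFrom E k u ↔ IsWalk E l ∧ l.head? = some u ∧ l.length = k + 1 := by
  induction k generalizing u l with
  | zero =>
    constructor
    · intro h
      simp_all [walksFrom, IsWalk]
    · rintro ⟨-, hu, hl⟩
      obtain ⟨a, rfl⟩ := List.length_eq_one_iff.mp hl
      simp_all [walksFrom]
  | succ k ih =>
    simp only [walksFrom, mem_biUnion, mem_image, ih, outNbrs, mem_filter, mem_univ, true_and]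
    constructor
    · rintro ⟨w, huw, l, ⟨hl, hw, hlen⟩, rfl⟩
      obtain ⟨t, rfl⟩ : ∃ t, l = w :: t := List.head?_eq_some_iff.mp hw
      exact ⟨⟨huw, hl⟩, rfl, by simp [hlen]⟩
    · rintro ⟨hl, hu, hlen⟩
      obtain ⟨t, rfl⟩ := List.head?_eq_some_iff.mp hu
      obtain ⟨w, t, rfl⟩ := List.exists_cons_of_length_eq_add_one (by simpa using hlen)
      exact ⟨w, hl.1, w :: t, ⟨hl.2, rfl, by simpa using hlen⟩, rfl⟩

theorem head_mem_of_mem_walksFrom {k : ℕ} {u : V} {l : List V} (hl : l ∈ walksFrom E k u) :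
    u ∈ l :=
  List.mem_of_mem_head? (mem_walksFrom.mp hl).2.1

theorem walkWt_cons_of_mem_walksFrom {k : ℕ} {w : V} {l : List V} (hl : l ∈ walksFrom E k w)
    (u : V) : walkWt E (u :: l) = ((outNbrs E u).card : ℝ≥0∞)⁻¹ * walkWt E l :=
  walkWt_cons (List.ne_nil_of_mem (head_mem_of_mem_walksFrom hl)) u

theorem sum_walksFrom_succ {M : Type*} [AddCommMonoid M] (f : List V → M) (k : ℕ) (u : V) :
    ∑ l ∈ walksFrom E (k + 1) u, f l = ∑ w ∈ outNbrs E u, ∑ l ∈ walksFrom E k w, f (u :: l) := by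
  rw [walksFrom, sum_biUnion]
  · exact sum_congr rfl fun w _ => sum_image fun _ _ _ _ h => List.cons_injective h
  · intro w₁ _ w₂ _ hne
    simp only [Function.onFun, disjoint_left, mem_image]
    rintro _ ⟨l₁, hl₁, rfl⟩ ⟨l₂, hl₂, hl⟩
    obtain rfl := List.cons_injective hl
    exact hne (Option.some_injective _
      ((mem_walksFrom.mp hl₁).2.1.symm.trans (mem_walksFrom.mp hl₂).2.1))

theorem sum_walkWt_walksFrom_succ (p : List V → Prop) [DecidablePred p] (k : ℕ) (u : V) :
    ∑ l ∈ walksFrom E (k + 1) u with p l, walkWt E l =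
      ((outNbrs E u).card : ℝ≥0∞)⁻¹ *
        ∑ w ∈ outNbrs E u, ∑ l ∈ walksFrom E k w with p (u :: l), walkWt E l := by
  rw [sum_filter, sum_walksFrom_succ, mul_sum]
  refine sum_congr rfl fun w _ => ?_
  rw [sum_filter, mul_sum]
  refine sum_congr rfl fun l hl => ?_
  rw [walkWt_cons_of_mem_walksFrom hl, mul_ite, mul_zero]

theorem sum_walkWt_walksFrom (hE : ∀ a, (outNbrs E a).Nonempty) (k : ℕ) (u : V) :
    ∑ l ∈ walksFrom E k u, walkWt E l = 1 := by
  induction k generalizing u with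
  | zero => simp [walksFrom, walkWt]
  | succ k ih =>
    have hdeg : ((outNbrs E u).card : ℝ≥0∞) ≠ 0 := by simpa using (hE u).ne_empty
    simpa [ih, ENNReal.inv_mul_cancel hdeg (ENNReal.natCast_ne_top _)] using
      sum_walkWt_walksFrom_succ (E := E) (fun _ => True) k u

theorem sum_walkWt_walksFrom_prefix (hE : ∀ a, (outNbrs E a).Nonempty) {t : List V}
    (ht : IsWalk E t) {u : V} (hu : t.head? = some u) {k : ℕ} (hk : t.length ≤ k + 1) :
    ∑ l ∈ walksFrom E k u with t <+: l, walkWt E l = walkWt E t := by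
  induction t generalizing u k with
  | nil => simp at hu
  | cons a t ih =>
    obtain rfl : a = u := by simpa using hu
    cases t with
    | nil =>
      rw [filter_true_of_mem fun l hl => ?_, sum_walkWt_walksFrom hE]
      · rfl
      obtain ⟨t, rfl⟩ := List.head?_eq_some_iff.mp (mem_walksFrom.mp hl).2.1
      simp
    | cons b t =>
      obtain ⟨k, rfl⟩ : ∃ k', k = k' + 1 := Nat.exists_eq_add_of_le' (by simp at hk; omega)
      have hb : b ∈ outNbrs E a := by simpa [outNbrs] using ht.1
      simp only [sum_walkWt_walksFrom_succ, List.cons_prefix_cons, true_and]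
      rw [sum_eq_single_of_mem b hb fun w _ hwb => ?_, ih ht.2 rfl (by simpa using hk)]
      · rfl
      rw [filter_false_of_mem fun l hl hp => hwb ?_, sum_empty]
      obtain ⟨s, rfl⟩ := hp
      simpa using (mem_walksFrom.mp hl).2.1.symm

open scoped Classical in
noncomputable def coverToursWithin (E : V → V → Prop) [DecidableRel E] (k : ℕ) (u : V) :
    Finset (List V) :=
  ((range (k + 1)).biUnion fun j => walksFrom E j u).filter (· ∈ coverTours E u)

theorem mem_coverToursWithin {k : ℕ} {u : V} {t : List V} :
    t ∈ coverToursWithin E k u ↔ t ∈ coverTours E u ∧ t.length ≤ k + 1 := by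
  simp only [coverToursWithin, mem_filter, mem_biUnion, mem_range, mem_walksFrom]
  constructor
  · rintro ⟨⟨j, hj, -, -, hlen⟩, ht⟩
    exact ⟨ht, by omega⟩
  · rintro ⟨⟨v, ht⟩, hlen⟩
    have : t ≠ [] := (isWalk_iff_isChain.mp ht.1).1
    have : 0 < t.length := List.length_pos_iff.mpr this
    exact ⟨⟨t.length - 1, by omega, ht.1, ht.2.1, by omega⟩, v, ht⟩

theorem sum_walkWt_coverToursWithin (hE : ∀ a, (outNbrs E a).Nonempty) (k : ℕ) (u : V) :
    ∑ t ∈ coverToursWithin E k u, walkWt E t =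
      ∑ l ∈ walksFrom E k u with ∀ x, x ∈ l, walkWt E l := by
  have hfiber : (walksFrom E k u).filter (fun l => ∀ x, x ∈ l) =
      (coverToursWithin E k u).biUnion fun t => (walksFrom E k u).filter (t <+: ·) := by
    ext l
    simp only [mem_filter, mem_biUnion]
    constructor
    · rintro ⟨hl, hcov⟩
      obtain ⟨hwalk, hu, hlen⟩ := mem_walksFrom.mp hl
      obtain ⟨t, ht, htl⟩ := exists_coverTours_prefix hwalk hu hcov
      exact ⟨t, mem_coverToursWithin.mpr ⟨ht, hlen ▸ htl.length_le⟩, hl, htl⟩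
    · rintro ⟨t, ht, hl, htl⟩
      obtain ⟨⟨v, htv⟩, -⟩ := mem_coverToursWithin.mp ht
      exact ⟨hl, fun x => htl.subset (htv.2.2.2.1 x)⟩
  rw [hfiber, sum_biUnion]
  · refine (sum_congr rfl fun t ht => ?_).symm
    obtain ⟨⟨v, htv⟩, hlen⟩ := mem_coverToursWithin.mp ht
    exact sum_walkWt_walksFrom_prefix hE htv.1 htv.2.1 hlen
  · intro t₁ h₁ t₂ h₂ hne
    obtain ⟨⟨v₁, ht₁⟩, -⟩ := mem_coverToursWithin.mp h₁
    obtain ⟨⟨v₂, ht₂⟩, -⟩ := mem_coverToursWithin.mp h₂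
    refine disjoint_left.mpr fun l hl₁ hl₂ => hne ?_
    rcases List.prefix_or_prefix_of_prefix (mem_filter.mp hl₁).2 (mem_filter.mp hl₂).2 with h | h
    · exact ht₁.eq_of_prefix ht₂ h
    · exact (ht₂.eq_of_prefix ht₁ h).symm

theorem tsum_indicator_coverTours (hE : ∀ a, (outNbrs E a).Nonempty) {u : V}
    (hcover : Tendsto (fun k => ∑ l ∈ walksFrom E k u with ¬∀ x, x ∈ l, walkWt E l)
      atTop (𝓝 0)) :
    ∑' l, (coverTours E u).indicator (walkWt E) l = 1 := by
  set T := ∑' l, (coverTours E u).indicator (walkWt E) l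
  have hsplit (k : ℕ) : ∑ t ∈ coverToursWithin E k u, walkWt E t +
      ∑ l ∈ walksFrom E k u with ¬∀ x, x ∈ l, walkWt E l = 1 := by
    rw [sum_walkWt_coverToursWithin hE, sum_filter_add_sum_filter_not, sum_walkWt_walksFrom hE]
  have hwithin (k : ℕ) : ∑ t ∈ coverToursWithin E k u, walkWt E t =
      ∑ t ∈ coverToursWithin E k u, (coverTours E u).indicator (walkWt E) t :=
    sum_congr rfl fun t ht => (Set.indicator_of_mem (mem_coverToursWithin.mp ht).1 _).symm
  refine le_antisymm (ENNReal.summable.tsum_le_of_sum_le fun s => ?_) ?_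
  · calc ∑ l ∈ s, (coverTours E u).indicator (walkWt E) l
        ≤ ∑ l ∈ coverToursWithin E (s.sup List.length) u,
            (coverTours E u).indicator (walkWt E) l :=
          sum_le_sum_of_ne_zero fun l hl hne => mem_coverToursWithin.mpr
            ⟨Set.mem_of_indicator_ne_zero hne, (le_sup hl).trans (Nat.le_succ _)⟩
      _ ≤ 1 := by rw [← hwithin, ← hsplit (s.sup List.length)]; exact le_self_add
  · have hlim : Tendsto (fun k => T + ∑ l ∈ walksFrom E k u with ¬∀ x, x ∈ l, walkWt E l)
        atTop (𝓝 T) := by simpa using hcover.const_add T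
    refine ge_of_tendsto' hlim fun k => ?_
    rw [← hsplit k, hwithin]
    gcongr
    exact ENNReal.sum_le_tsum _

theorem sum_walkWt_walksFrom_avoiding_le {v : V} {r : ℝ≥0∞}
    (hr : ∀ a ≠ v, (((outNbrs E a).erase v).card : ℝ≥0∞) / (outNbrs E a).card ≤ r)
    (k : ℕ) (u : V) : ∑ l ∈ walksFrom E k u with v ∉ l, walkWt E l ≤ r ^ k := by
  have hstart (j : ℕ) : ∑ l ∈ walksFrom E j v with v ∉ l, walkWt E l = 0 := by
    rw [filter_false_of_mem fun l hl => not_not.mpr (head_mem_of_mem_walksFrom hl), sum_empty]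
  induction k generalizing u with
  | zero => by_cases hvu : v = u <;> simp [walksFrom, walkWt, filter_singleton, hvu]
  | succ k ih =>
    rcases eq_or_ne u v with rfl | huv
    · simp [hstart]
    simp only [sum_walkWt_walksFrom_succ, List.mem_cons, huv.symm, false_or]
    rw [← sum_erase (f := fun w => ∑ l ∈ walksFrom E k w with v ∉ l, walkWt E l) _ (hstart k)]
    calc ((outNbrs E u).card : ℝ≥0∞)⁻¹ *
          ∑ w ∈ (outNbrs E u).erase v, ∑ l ∈ walksFrom E k w with v ∉ l, walkWt E l
        ≤ ((outNbrs E u).card : ℝ≥0∞)⁻¹ * ∑ w ∈ (outNbrs E u).erase v, r ^ k := by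
          gcongr with w
          exact ih w
      _ = (((outNbrs E u).erase v).card : ℝ≥0∞) / (outNbrs E u).card * r ^ k := by
          rw [sum_const, nsmul_eq_mul, ENNReal.div_eq_inv_mul, mul_assoc]
      _ ≤ r * r ^ k := by gcongr; exact hr u huv
      _ = r ^ (k + 1) := (pow_succ' r k).symm

theorem sum_walkWt_walksFrom_not_covering_le {r : ℝ≥0∞}
    (hr : ∀ v, ∀ a ≠ v, (((outNbrs E a).erase v).card : ℝ≥0∞) / (outNbrs E a).card ≤ r)
    (k : ℕ) (u : V) :
    ∑ l ∈ walksFrom E k u with ¬∀ x, x ∈ l, walkWt E l ≤ Fintype.card V * r ^ k :=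
  calc ∑ l ∈ walksFrom E k u with ¬∀ x, x ∈ l, walkWt E l
      ≤ ∑ l ∈ walksFrom E k u, ∑ v, if v ∉ l then walkWt E l else 0 := by
        rw [sum_filter]
        gcongr with l
        split_ifs with hl
        · exact zero_le
        · obtain ⟨v, hv⟩ := not_forall.mp hl
          exact (if_pos hv).symm.trans_le
            (single_le_sum (f := fun v => if v ∉ l then walkWt E l else 0) (by simp) (mem_univ v))
    _ = ∑ v, ∑ l ∈ walksFrom E k u with v ∉ l, walkWt E l := by
        rw [sum_comm]
        simp only [sum_filter]
    _ ≤ ∑ _v : V, r ^ k := sum_le_sum fun v _ => sum_walkWt_walksFrom_avoiding_le (hr v) k u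
    _ = Fintype.card V * r ^ k := by simp

end

section CompleteGraph

variable {V : Type*} [Fintype V] [DecidableEq V]

theorem outNbrs_complete (a : V) : outNbrs (· ≠ ·) a = univ.erase a := by
  ext x
  simp [outNbrs, eq_comm]

theorem coverProb_complete_eq {u v w : V} (hv : v ≠ u) (hw : w ≠ u) :
    coverProb (· ≠ ·) u v = coverProb (· ≠ ·) u w := by
  have := coverProb_map (Equiv.swap v w) (fun _ _ => (Equiv.swap v w).injective.ne_iff) u w
  rwa [Equiv.swap_apply_of_ne_of_ne hv.symm hw.symm, Equiv.swap_apply_right] at this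

theorem sum_coverProb_complete [Nontrivial V] (u : V) : ∑ v, coverProb (· ≠ ·) u v = 1 := by
  have hn : 2 ≤ Fintype.card V := Fintype.one_lt_card
  set r : ℝ≥0∞ := ((Fintype.card V - 2 : ℕ) : ℝ≥0∞) / ((Fintype.card V - 1 : ℕ) : ℝ≥0∞)
  have hr : ∀ v : V, ∀ a ≠ v,
      (((outNbrs (· ≠ ·) a).erase v).card : ℝ≥0∞) / (outNbrs (· ≠ ·) a).card ≤ r := by
    intro v a hav
    rw [outNbrs_complete, card_erase_of_mem (by simpa using hav.symm),
      card_erase_of_mem (mem_univ a), card_univ, Nat.sub_sub]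
  have hr1 : r < 1 := by
    rw [ENNReal.div_lt_iff (Or.inl (Nat.cast_ne_zero.mpr (by omega))) (by simp), one_mul]
    exact_mod_cast (by omega : Fintype.card V - 2 < Fintype.card V - 1)
  have hE (a : V) : (outNbrs (· ≠ ·) a).Nonempty := by
    rw [outNbrs_complete]
    exact (exists_ne a).imp fun x hx => by simpa using hx
  have hbound : Tendsto (fun k => (Fintype.card V : ℝ≥0∞) * r ^ k) atTop (𝓝 0) := by
    simpa using ENNReal.Tendsto.const_mul (ENNReal.tendsto_pow_atTop_nhds_zero_of_lt_one hr1)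
      (Or.inr (ENNReal.natCast_ne_top (Fintype.card V)))
  rw [sum_coverProb, tsum_indicator_coverTours hE (tendsto_of_tendsto_of_tendsto_of_le_of_le
    tendsto_const_nhds hbound (fun _ => zero_le)
    (sum_walkWt_walksFrom_not_covering_le hr · u))]

end CompleteGraph

theorem stmt11_general {V : Type*} [Fintype V] [DecidableEq V]
    (u v : V) (hne : v ≠ u) :
    coverProb (fun x y : V => x ≠ y) u v = ((Fintype.card V - 1 : ℕ) : ℝ≥0∞)⁻¹ := by
  have : Nontrivial V := ⟨⟨v, u, hne⟩⟩
  have hsum := sum_coverProb_complete u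
  rw [← add_sum_erase _ _ (mem_univ u), coverProb_self, zero_add,
    sum_congr rfl fun w hw => coverProb_complete_eq (ne_of_mem_erase hw) hne, sum_const,
    card_erase_of_mem (mem_univ u), card_univ, nsmul_eq_mul, mul_comm] at hsum
  exact ENNReal.eq_inv_of_mul_eq_one_left hsum

/-- On the bidirected complete graph `Kₙ` (`n ≥ 3`), a random cover tour from `u` is
equally likely to end at each of the other `n - 1` vertices:
`P(L(u,v)) = 1/(n-1)` for all `v ≠ u`. -/
theorem stmt11 {V : Type*} [Fintype V] [DecidableEq V]
    (h3 : 3 ≤ Fintype.card V) (u v : V) (hne : v ≠ u) :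
    coverProb (fun x y : V => x ≠ y) u v = ((Fintype.card V - 1 : ℕ) : ℝ≥0∞)⁻¹ :=
  stmt11_general u v hne
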